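/- Let K ∈ ℕ and x1, x2, x3 ∈ ℝ≥0 with x1 ≡^K x2 ≡^K x3. Then the composition τ_{x2→x3} ∘ τ_{x1→x2} is identical to τ_{x1→x3} as a map on timestamps. -/

import Mathlib

open scoped NNReal Classical

namespace IRTA

/-- A timestamp is a finite sequence of non-negative reals. -/
abbrev Timestamp : Type := List ℝ≥0

/-- A timed word is a finite sequence of (delay, letter) pairs. -/
abbrev TimedWord (A : Type) : Type := List (ℝ≥0 × A)

/-- Fractional part of a non-negative real. -/
noncomputable def fracPart (x : ℝ≥0) : ℝ≥0 := x - (⌊x⌋₊ : ℝ≥0)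

/-- `x` is a natural-number value. -/
def IsNatVal (x : ℝ≥0) : Prop := ∃ m : ℕ, x = (m : ℝ≥0)

/-- Region equivalence `≡^K`. -/
def RegEq (K : ℕ) (x y : ℝ≥0) : Prop :=
  (⌊x⌋₊ = ⌊y⌋₊ ∧ (fracPart x = 0 ↔ fracPart y = 0)) ∨ ((K : ℝ≥0) < x ∧ (K : ℝ≥0) < y)

/-- One step of the (greedy) clock evolution: reset whenever the value is an
integer between `0` and `K`. -/
noncomputable def resetStep (K : ℕ) (v : ℝ≥0) : ℝ≥0 :=
  if ∃ m : ℕ, m ≤ K ∧ v = (m : ℝ≥0) then 0 else v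

/-- Auxiliary function computing `c^K` with accumulator `v`. -/
noncomputable def cKAux (K : ℕ) : ℝ≥0 → Timestamp → ℝ≥0
  | v, [] => v
  | v, t :: d => cKAux K (resetStep K (v + t)) d

/-- `c^K(d)`: the sum of the delays after the last integral position of `d`. -/
noncomputable def cK (K : ℕ) (d : Timestamp) : ℝ≥0 := cKAux K 0 d

/-- `c^K` of a timed word is `c^K` of its timestamp. -/
noncomputable def cKW {A : Type} (K : ℕ) (w : TimedWord A) : ℝ≥0 :=
  cK K (w.map Prod.fst)

/-- `c^K_⊤` : `c^K` truncated at `K`. -/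
noncomputable def cKTop {A : Type} (K : ℕ) (w : TimedWord A) : WithTop ℝ≥0 :=
  if cKW K w ≤ (K : ℝ≥0) then ((cKW K w : ℝ≥0) : WithTop ℝ≥0) else ⊤

/-! ### Clock constraints and one-clock timed automata -/

/-- Clock constraints `φ ::= x < m | m < x | x = m | φ ∧ φ`. -/
inductive CC : Type where
  | lt : ℕ → CC
  | gt : ℕ → CC
  | eq : ℕ → CC
  | and : CC → CC → CC

/-- Satisfaction of a clock constraint by a clock value. -/
def CC.sat : CC → ℝ≥0 → Prop
  | .lt m, x => x < (m : ℝ≥0)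
  | .gt m, x => (m : ℝ≥0) < x
  | .eq m, x => x = (m : ℝ≥0)
  | .and φ ψ, x => φ.sat x ∧ ψ.sat x

/-- The largest constant appearing in a clock constraint. -/
def CC.maxConst : CC → ℕ
  | .lt m => m
  | .gt m => m
  | .eq m => m
  | .and φ ψ => max φ.maxConst ψ.maxConst

/-- A transition of a one-clock timed automaton; `reset = true` means the
clock is reset (the `r = 0` case). -/
structure TTrans (Q A : Type) where
  src : Q
  dst : Q
  lab : A
  guard : CC
  reset : Bool

/-- A one-clock timed automaton. -/
structure TA (A : Type) where
  Q : Type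
  init : Q
  final : Set Q
  trans : Set (TTrans Q A)

/-- The automaton has finitely many states and transitions. -/
def TA.IsFinite {A : Type} (M : TA A) : Prop := Finite M.Q ∧ M.trans.Finite

/-- Runs of a one-clock timed automaton between configurations. -/
inductive Steps {A : Type} (M : TA A) : M.Q × ℝ≥0 → TimedWord A → M.Q × ℝ≥0 → Prop
  | nil (c : M.Q × ℝ≥0) : Steps M c [] c
  | cons {q : M.Q} {ν t : ℝ≥0} {a : A} {w : TimedWord A} {c : M.Q × ℝ≥0}
      (θ : TTrans M.Q A) (hθ : θ ∈ M.trans) (hsrc : θ.src = q) (hlab : θ.lab = a)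
      (hg : θ.guard.sat (ν + t))
      (hrest : Steps M (θ.dst, if θ.reset then 0 else ν + t) w c) :
      Steps M (q, ν) ((t, a) :: w) c

/-- The language of `M` from a given configuration. -/
def TA.LangFrom {A : Type} (M : TA A) (c : M.Q × ℝ≥0) : Set (TimedWord A) :=
  {w | ∃ q' : M.Q, ∃ ν' : ℝ≥0, Steps M c w (q', ν') ∧ q' ∈ M.final}

/-- The language of `M` (from the initial configuration). -/
def TA.Lang {A : Type} (M : TA A) : Set (TimedWord A) := M.LangFrom (M.init, 0)

/-- Determinism: distinct transitions with the same source and letter have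
disjoint guards. -/
def TA.Deterministic {A : Type} (M : TA A) : Prop :=
  ∀ θ₁ ∈ M.trans, ∀ θ₂ ∈ M.trans, θ₁ ≠ θ₂ → θ₁.src = θ₂.src → θ₁.lab = θ₂.lab →
    ∀ x : ℝ≥0, ¬ (θ₁.guard.sat x ∧ θ₂.guard.sat x)

/-- Completeness: every timed word admits a run from the initial configuration. -/
def TA.Complete {A : Type} (M : TA A) : Prop :=
  ∀ w : TimedWord A, ∃ c : M.Q × ℝ≥0, Steps M (M.init, 0) w c

/-- A 1-IRTA: every resetting transition has an equality guard. -/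
def TA.IsIRTA {A : Type} (M : TA A) : Prop :=
  ∀ θ ∈ M.trans, θ.reset = true → ∃ m : ℕ, θ.guard = CC.eq m

/-- Guards allowed in a strict 1-IRTA with constant `K`. -/
def StrictGuard (K : ℕ) (φ : CC) : Prop :=
  (∃ m : ℕ, φ = CC.eq m) ∨ (∃ m : ℕ, φ = CC.and (CC.gt m) (CC.lt (m + 1))) ∨ φ = CC.gt K

/-- Strictness with constant `K`: every guard is of one of the allowed forms
and a guard is an equality iff the transition resets. -/
def TA.IsStrict {A : Type} (M : TA A) (K : ℕ) : Prop :=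
  ∀ θ ∈ M.trans, StrictGuard K θ.guard ∧ ((∃ m : ℕ, θ.guard = CC.eq m) ↔ θ.reset = true)

/-- All constants appearing in guards are at most `K`. -/
def TA.MaxConstLE {A : Type} (M : TA A) (K : ℕ) : Prop :=
  ∀ θ ∈ M.trans, θ.guard.maxConst ≤ K

/-- `M` reaches the same control state on reading `u` and `v` from the initial
configuration. -/
def TA.SameState {A : Type} (M : TA A) (u v : TimedWord A) : Prop :=
  ∃ q : M.Q, ∃ ν ν' : ℝ≥0, Steps M (M.init, 0) u (q, ν) ∧ Steps M (M.init, 0) v (q, ν')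

/-- A `K`-acceptor. -/
def IsKAcceptor {A : Type} (M : TA A) (K : ℕ) : Prop :=
  M.IsFinite ∧ M.Complete ∧ M.Deterministic ∧ M.IsIRTA ∧ M.IsStrict K ∧ M.MaxConstLE K ∧
    ∀ u v : TimedWord A, M.SameState u v → RegEq K (cKW K u) (cKW K v)

/-! ### Equivalences on timed words -/

/-- `L`-preservation of a relation on timed words. -/
def LPreserving {A : Type} (L : Set (TimedWord A)) (r : TimedWord A → TimedWord A → Prop) :
    Prop :=
  ∀ u v : TimedWord A, r u v → (u ∈ L ↔ v ∈ L)

/-- `K`-monotonicity of a relation on timed words. -/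
def KMonotonic {A : Type} (K : ℕ) (r : TimedWord A → TimedWord A → Prop) : Prop :=
  ∀ u v : TimedWord A, r u v →
    RegEq K (cKW K u) (cKW K v) ∧
      ∀ (a : A) (t t' : ℝ≥0), RegEq K (cKW K u + t) (cKW K v + t') →
        r (u ++ [(t, a)]) (v ++ [(t', a)])

/-- Finite index: there are finitely many classes `{v | r u v}`. -/
def FiniteIndex {A : Type} (r : TimedWord A → TimedWord A → Prop) : Prop :=
  Set.Finite (Set.range fun u : TimedWord A => {v : TimedWord A | r u v})

/-! ### The rescaling maps -/

/-- The bijection `f_{λ→λ'}` of the open unit interval. -/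
noncomputable def fScale (lam lam' t : ℝ≥0) : ℝ≥0 :=
  if t ≤ lam then (lam' / lam) * t else lam' + ((1 - lam') / (1 - lam)) * (t - lam)

/-- The new delay `t'` computed from the current clock values `y, y'` and delay `t`. -/
noncomputable def tauStep (K : ℕ) (y y' t : ℝ≥0) : ℝ≥0 :=
  if (IsNatVal y ∧ IsNatVal y') ∨ ((K : ℝ≥0) < y ∧ (K : ℝ≥0) < y') then t
  else (⌊t⌋₊ : ℝ≥0) + fScale (1 - fracPart y) (1 - fracPart y') (fracPart t)

/-- Auxiliary rescaling map on timestamps, carrying the current clock values. -/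
noncomputable def tauAux (K : ℕ) : ℝ≥0 → ℝ≥0 → Timestamp → Timestamp
  | _, _, [] => []
  | y, y', t :: d =>
      tauStep K y y' t ::
        tauAux K (resetStep K (y + t)) (resetStep K (y' + tauStep K y y' t)) d

/-- The rescaling map `τ_{x→x'}` on timestamps. -/
noncomputable def tau (K : ℕ) (x x' : ℝ≥0) (d : Timestamp) : Timestamp :=
  tauAux K (resetStep K x) (resetStep K x') d

/-- Auxiliary rescaling map on timed words. -/
noncomputable def tauWAux {A : Type} (K : ℕ) : ℝ≥0 → ℝ≥0 → TimedWord A → TimedWord A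
  | _, _, [] => []
  | y, y', (t, a) :: w =>
      (tauStep K y y' t, a) ::
        tauWAux K (resetStep K (y + t)) (resetStep K (y' + tauStep K y y' t)) w

/-- The rescaling map `τ_{x→x'}` on timed words. -/
noncomputable def tauW {A : Type} (K : ℕ) (x x' : ℝ≥0) (w : TimedWord A) : TimedWord A :=
  tauWAux K (resetStep K x) (resetStep K x') w

/-! ### Residuals and the syntactic equivalence -/

/-- The residual language `u^{-1}L`. -/
def residual {A : Type} (L : Set (TimedWord A)) (u : TimedWord A) : Set (TimedWord A) :=
  {w : TimedWord A | u ++ w ∈ L}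

/-- The syntactic equivalence `≈^{L,K}`. -/
def ApproxLK {A : Type} (L : Set (TimedWord A)) (K : ℕ) (u v : TimedWord A) : Prop :=
  RegEq K (cKW K u) (cKW K v) ∧
    (tauW K (cKW K u) (cKW K v)) '' (residual L u) = residual L v

/-! ### The automaton built from a monotonic equivalence -/

/-- The region guard `φ([t])`. -/
noncomputable def phiOf (K : ℕ) (t : ℝ≥0) : CC :=
  if t ≤ (K : ℝ≥0) then
    (if IsNatVal t then CC.eq ⌊t⌋₊ else CC.and (CC.gt ⌊t⌋₊) (CC.lt (⌊t⌋₊ + 1)))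
  else CC.gt K

/-- The automaton `A_≈` built from an equivalence `s` on timed words. -/
noncomputable def Aapprox {A : Type} (L : Set (TimedWord A)) (K : ℕ)
    (s : Setoid (TimedWord A)) : TA A where
  Q := Quotient s
  init := Quotient.mk s ([] : TimedWord A)
  final := {q : Quotient s | ∃ u : TimedWord A, q = Quotient.mk s u ∧ u ∈ L}
  trans := {θ : TTrans (Quotient s) A |
    ∃ (u : TimedWord A) (a : A) (t : ℝ≥0),
      θ.src = Quotient.mk s u ∧ θ.dst = Quotient.mk s (u ++ [(t, a)]) ∧ θ.lab = a ∧
      θ.guard = phiOf K (cKW K u + t) ∧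
      (θ.reset = true ↔ ∃ m : ℕ, m ≤ K ∧ cKW K u + t = (m : ℝ≥0))}

/-! ### Half-integral and small words -/

/-- Every delay has fractional part `0` or `1/2`. -/
def HalfIntegral {A : Type} (w : TimedWord A) : Prop :=
  ∀ p ∈ w, fracPart p.1 = 0 ∨ fracPart p.1 = 1 / 2

/-- Every delay is `< K + 1`. -/
def SmallWord {A : Type} (K : ℕ) (w : TimedWord A) : Prop :=
  ∀ p ∈ w, p.1 < (K : ℝ≥0) + 1

/-- The delays of `Σ_K`: half-integral values `≤ K + 1/2`. -/
def IsSigmaK (K : ℕ) (t : ℝ≥0) : Prop :=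
  (fracPart t = 0 ∨ fracPart t = 1 / 2) ∧ t ≤ (K : ℝ≥0) + 1 / 2

/-- Words over `Σ_K` (small half-integral words). -/
def SigmaWord {A : Type} (K : ℕ) (w : TimedWord A) : Prop :=
  ∀ p ∈ w, IsSigmaK K p.1



/-! ### `K`-acceptors with their region representatives -/

/-- A `K`-acceptor bundled with the half-integral representative of the
unique region of each state. -/
structure KAcc (A : Type) (K : ℕ) where
  M : TA A
  acc : IsKAcceptor M K
  reg : M.Q → ℝ≥0
  regHalf : ∀ q : M.Q, fracPart (reg q) = 0 ∨ fracPart (reg q) = 1 / 2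
  regLe : ∀ q : M.Q, reg q ≤ (K : ℝ≥0) + 1 / 2
  regSpec : ∀ (w : TimedWord A) (q : M.Q) (x : ℝ≥0),
    Steps M (M.init, 0) w (q, x) → RegEq K x (reg q)

/-- The minimization equivalences `∼^i` on the states of a `K`-acceptor. -/
def simEq {A : Type} {K : ℕ} (B : KAcc A K) : ℕ → B.M.Q → B.M.Q → Prop
  | 0, p, q => B.reg p = B.reg q ∧ (p ∈ B.M.final ↔ q ∈ B.M.final)
  | i + 1, p, q => simEq B i p q ∧
      ∀ (t : ℝ≥0) (a : A), IsSigmaK K t →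
        ∀ θ₁ θ₂ : TTrans B.M.Q A, θ₁ ∈ B.M.trans → θ₂ ∈ B.M.trans →
          θ₁.src = p → θ₂.src = q → θ₁.lab = a → θ₂.lab = a →
          θ₁.guard = phiOf K t → θ₂.guard = phiOf K t →
          simEq B i θ₁.dst θ₂.dst

/-- The quotient automaton `B/∼^m`. -/
noncomputable def quotTA {A : Type} {K : ℕ} (B : KAcc A K) (m : ℕ) : TA A where
  Q := Quot (simEq B m)
  init := Quot.mk (simEq B m) B.M.init
  final := {c : Quot (simEq B m) | ∃ q ∈ B.M.final, c = Quot.mk (simEq B m) q}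
  trans := {θ : TTrans (Quot (simEq B m)) A |
    ∃ θ₀ ∈ B.M.trans,
      θ.src = Quot.mk (simEq B m) θ₀.src ∧ θ.dst = Quot.mk (simEq B m) θ₀.dst ∧
      θ.lab = θ₀.lab ∧ θ.guard = θ₀.guard ∧ θ.reset = θ₀.reset}

/-! ### Observation tables -/

/-- An observation table over `Σ_K`. -/
structure ObsTable (A : Type) (K : ℕ) where
  U1 : Set (TimedWord A)
  E : Set (TimedWord A)
  val : TimedWord A → TimedWord A → Bool
  U1fin : U1.Finite
  Efin : E.Finite
  U1sigma : ∀ u ∈ U1, SigmaWord K u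
  Esigma : ∀ e ∈ E, SigmaWord K e
  epsU1 : ([] : TimedWord A) ∈ U1
  prefixClosed : ∀ (u : TimedWord A) (x : ℝ≥0 × A), u ++ [x] ∈ U1 → u ∈ U1
  epsE : ([] : TimedWord A) ∈ E
  suffixClosed : ∀ (x : ℝ≥0 × A) (e : TimedWord A), x :: e ∈ E → e ∈ E

/-- The set `U2` of one-letter `Σ_K`-extensions of `U1`. -/
def obsU2 {A : Type} {K : ℕ} (T : ObsTable A K) : Set (TimedWord A) :=
  {w : TimedWord A | ∃ u ∈ T.U1, ∃ (t : ℝ≥0) (a : A), IsSigmaK K t ∧ w = u ++ [(t, a)]}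

/-- `R(u)`: the row of `u` (restricted to `E`) together with `c^K_⊤(u)`. -/
noncomputable def Rof {A : Type} {K : ℕ} (T : ObsTable A K) (u : TimedWord A) :
    ({e : TimedWord A // e ∈ T.E} → Bool) × WithTop ℝ≥0 :=
  (fun e => T.val u e.1, cKTop K u)

/-- The table is closed. -/
def ObsTable.Closed {A : Type} {K : ℕ} (T : ObsTable A K) : Prop :=
  ∀ w ∈ obsU2 T, ∃ u ∈ T.U1, Rof T w = Rof T u

/-- The table is consistent. -/
def ObsTable.Consistent {A : Type} {K : ℕ} (T : ObsTable A K) : Prop :=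
  ∀ u ∈ T.U1, ∀ w ∈ T.U1, Rof T u = Rof T w →
    ∀ (t : ℝ≥0) (a : A), IsSigmaK K t → Rof T (u ++ [(t, a)]) = Rof T (w ++ [(t, a)])

/-- The automaton `A_𝒯` induced by a (closed and consistent) observation table. -/
noncomputable def ATable {A : Type} {K : ℕ} (T : ObsTable A K) : TA A where
  Q := {f : ({e : TimedWord A // e ∈ T.E} → Bool) × WithTop ℝ≥0 // ∃ u ∈ T.U1, f = Rof T u}
  init := ⟨Rof T [], ⟨[], T.epsU1, rfl⟩⟩
  final := {q | ∃ u ∈ T.U1, q.1 = Rof T u ∧ T.val u [] = true}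
  trans := {θ | ∃ u ∈ T.U1, ∃ (t : ℝ≥0) (a : A), IsSigmaK K t ∧
      θ.src.1 = Rof T u ∧ θ.dst.1 = Rof T (u ++ [(t, a)]) ∧ θ.lab = a ∧
      θ.guard = phiOf K (cKW K u + t) ∧
      (θ.reset = true ↔ ∃ m : ℕ, m ≤ K ∧ cKW K u + t = (m : ℝ≥0))}

/-- A `K`-acceptor is consistent with the observation table `𝒯`. -/
def ConsistentWith {A : Type} {K : ℕ} (M : TA A) (T : ObsTable A K) : Prop :=
  ∀ w : TimedWord A, (w ∈ T.U1 ∨ w ∈ obsU2 T) → ∀ e ∈ T.E,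
    ∀ (q : M.Q) (ν : ℝ≥0), Steps M (M.init, 0) (w ++ e) (q, ν) →
      (q ∈ M.final ↔ T.val w e = true)

/-- Isomorphism of one-clock timed automata. -/
structure TAIso {A : Type} (M N : TA A) where
  toEquiv : M.Q ≃ N.Q
  init_eq : toEquiv M.init = N.init
  final_iff : ∀ q : M.Q, q ∈ M.final ↔ toEquiv q ∈ N.final
  trans_iff : ∀ θ : TTrans M.Q A,
    θ ∈ M.trans ↔
      (⟨toEquiv θ.src, toEquiv θ.dst, θ.lab, θ.guard, θ.reset⟩ : TTrans N.Q A) ∈ N.trans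

/-!
Along a timestamp, `τ_{x→x'}` keeps its two running clocks `y, y'` region equivalent: when
`y, y'` lie in the same open unit interval below `K`, the fractional part of the delay is moved by
the increasing bijection `f_{1-{y} → 1-{y'}}`, which sends exactly the delays reaching the next
integer to delays doing the same; otherwise the delay is kept, and `y = y'` or both exceed `K`.
Hence the clocks of `τ_{x₁→x₂}`, `τ_{x₂→x₃}` and `τ_{x₁→x₃}` stay pairwise equivalent, each delay
is transformed either three times by the identity or by `f_{λ₁→λ₂}`, `f_{λ₂→λ₃}` and
`f_{λ₁→λ₃}`, and `f_{λ₂→λ₃} ∘ f_{λ₁→λ₂} = f_{λ₁→λ₃}`.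
-/

section FracPart

lemma floor_add_fracPart (x : ℝ≥0) : (⌊x⌋₊ : ℝ≥0) + fracPart x = x :=
  add_tsub_cancel_of_le (Nat.floor_le (zero_le : 0 ≤ x))

lemma fracPart_lt_one (x : ℝ≥0) : fracPart x < 1 := by
  rw [fracPart, tsub_lt_iff_left (Nat.floor_le (zero_le : 0 ≤ x))]
  exact Nat.lt_floor_add_one x

lemma fracPart_eq_zero_iff {x : ℝ≥0} : fracPart x = 0 ↔ x = ⌊x⌋₊ := by
  rw [fracPart, tsub_eq_zero_iff_le]
  exact ⟨fun h => le_antisymm h (Nat.floor_le (zero_le : 0 ≤ x)), le_of_eq⟩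

lemma fracPart_natCast (n : ℕ) : fracPart n = 0 := by
  simp [fracPart]

lemma fracPart_natCast_add (n : ℕ) (x : ℝ≥0) : fracPart (n + x) = fracPart x := by
  rw [fracPart, add_comm, Nat.floor_add_natCast (zero_le : 0 ≤ x), Nat.cast_add,
    add_tsub_add_eq_tsub_right, fracPart]

lemma floor_natCast_add (n : ℕ) (x : ℝ≥0) : ⌊(n : ℝ≥0) + x⌋₊ = n + ⌊x⌋₊ := by
  rw [add_comm, Nat.floor_add_natCast (zero_le : 0 ≤ x), add_comm]

lemma fracPart_of_lt_one {x : ℝ≥0} (hx : x < 1) : fracPart x = x := by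
  simp [fracPart, Nat.floor_eq_zero.mpr hx]

lemma one_sub_fracPart_mem_Ioo {x : ℝ≥0} (hx : fracPart x ≠ 0) :
    1 - fracPart x ∈ Set.Ioo (0 : ℝ≥0) 1 :=
  ⟨tsub_pos_of_lt (fracPart_lt_one x), tsub_lt_self one_pos (pos_iff_ne_zero.mpr hx)⟩

lemma natCast_lt_iff {K : ℕ} {x : ℝ≥0} :
    (K : ℝ≥0) < x ↔ K < ⌊x⌋₊ ∨ (K = ⌊x⌋₊ ∧ fracPart x ≠ 0) := by
  constructor
  · intro h
    rcases (Nat.le_floor h.le).lt_or_eq with hlt | heq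
    · exact Or.inl hlt
    · refine Or.inr ⟨heq, fun h0 => h.ne ?_⟩
      rw [fracPart_eq_zero_iff.mp h0, heq]
  · rintro (hlt | ⟨rfl, h0⟩)
    · exact Nat.lt_of_lt_floor hlt
    · refine (Nat.floor_le (zero_le : 0 ≤ x)).lt_of_ne fun h => h0 ?_
      exact fracPart_eq_zero_iff.mpr (by exact_mod_cast h.symm)

lemma floor_fracPart_add {μ s : ℝ≥0} (hμ : μ ∈ Set.Ioo (0 : ℝ≥0) 1) (hs : s < 1) :
    ⌊μ + s⌋₊ = (if 1 - μ ≤ s then 1 else 0) ∧ (fracPart (μ + s) = 0 ↔ s = 1 - μ) := by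
  have hsub : s = 1 - μ ↔ μ + s = 1 := by
    rw [eq_tsub_iff_add_eq_of_le hμ.2.le, add_comm]
  by_cases hle : 1 - μ ≤ s
  · obtain ⟨w, hw⟩ : ∃ w, μ + s = 1 + w :=
      ⟨μ + s - 1, (add_tsub_cancel_of_le (tsub_le_iff_left.mp hle)).symm⟩
    have hw1 : w < 1 := by
      have := add_lt_add hμ.2 hs
      rw [hw] at this
      exact lt_of_add_lt_add_left this
    refine ⟨?_, ?_⟩
    · rw [if_pos hle, hw, add_comm, Nat.floor_add_one (zero_le : 0 ≤ w),
        Nat.floor_eq_zero.mpr hw1]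
    · have hfrac : fracPart (1 + w) = w := by
        simpa [fracPart_of_lt_one hw1] using fracPart_natCast_add 1 w
      rw [hsub, hw, hfrac]
      simp
  · have hlt : μ + s < 1 := lt_tsub_iff_left.mp (not_le.mp hle)
    rw [if_neg hle, Nat.floor_eq_zero.mpr hlt, fracPart_of_lt_one hlt, hsub]
    exact ⟨rfl, iff_of_false (add_pos_of_pos_of_nonneg hμ.1 zero_le).ne' hlt.ne⟩

end FracPart

section Region

/-- The `≡^K`-class of a clock value: `none` above `K`, otherwise its integral part and
whether it is an integer. -/
noncomputable def region (K : ℕ) (x : ℝ≥0) : Option (ℕ × Bool) :=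
  if (K : ℝ≥0) < x then none else some (⌊x⌋₊, decide (fracPart x = 0))

lemma regEq_iff_region_eq {K : ℕ} {x y : ℝ≥0} : RegEq K x y ↔ region K x = region K y := by
  have hlt : ⌊x⌋₊ = ⌊y⌋₊ → (fracPart x = 0 ↔ fracPart y = 0) →
      ((K : ℝ≥0) < x ↔ (K : ℝ≥0) < y) := by
    intro hfl hfr
    simp only [natCast_lt_iff, hfl, ne_eq, hfr]
  unfold RegEq region
  by_cases hx : (K : ℝ≥0) < x <;> by_cases hy : (K : ℝ≥0) < y <;>
    simp only [hx, hy, ↓reduceIte, reduceCtorEq, and_true, and_false, and_self, or_true, or_false,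
      iff_false, not_and, Option.some.injEq, Prod.mk.injEq, decide_eq_decide] <;> tauto

lemma regEq_refl (K : ℕ) (x : ℝ≥0) : RegEq K x x := regEq_iff_region_eq.mpr rfl

lemma RegEq.trans {K : ℕ} {x y z : ℝ≥0} (hxy : RegEq K x y) (hyz : RegEq K y z) :
    RegEq K x z :=
  regEq_iff_region_eq.mpr ((regEq_iff_region_eq.mp hxy).trans (regEq_iff_region_eq.mp hyz))

/-- `y` lies in an open unit interval below `K`; exactly then `tauStep` rescales. -/
def IsOpenRegion (K : ℕ) (y : ℝ≥0) : Prop := fracPart y ≠ 0 ∧ ¬ (K : ℝ≥0) < y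

lemma isOpenRegion_iff_region {K : ℕ} {y : ℝ≥0} :
    IsOpenRegion K y ↔ ∃ n, region K y = some (n, false) := by
  unfold IsOpenRegion region
  split_ifs <;> simp_all

lemma RegEq.floor_eq {K : ℕ} {y y' : ℝ≥0} (h : RegEq K y y') (hy : ¬ (K : ℝ≥0) < y) :
    ⌊y⌋₊ = ⌊y'⌋₊ := by
  rw [regEq_iff_region_eq] at h
  unfold region at h
  split_ifs at h
  simp_all

lemma RegEq.isOpenRegion_iff {K : ℕ} {y y' : ℝ≥0} (h : RegEq K y y') :
    IsOpenRegion K y ↔ IsOpenRegion K y' := by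
  rw [isOpenRegion_iff_region, isOpenRegion_iff_region, regEq_iff_region_eq.mp h]

lemma RegEq.eq_or_lt_of_not_isOpenRegion {K : ℕ} {y y' : ℝ≥0} (h : RegEq K y y')
    (hy : ¬ IsOpenRegion K y) : y = y' ∨ ((K : ℝ≥0) < y ∧ (K : ℝ≥0) < y') := by
  rw [regEq_iff_region_eq] at h
  unfold IsOpenRegion at hy
  unfold region at h
  split_ifs at h with hK hK'
  · exact Or.inr ⟨hK, hK'⟩
  · simp only [Option.some.injEq, Prod.mk.injEq, decide_eq_decide] at h
    have h0 : fracPart y = 0 := not_not.mp fun h0 => hy ⟨h0, hK⟩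
    refine Or.inl ?_
    calc y = ⌊y⌋₊ := fracPart_eq_zero_iff.mp h0
      _ = ⌊y'⌋₊ := by rw [h.1]
      _ = y' := (fracPart_eq_zero_iff.mp (h.2.mp h0)).symm

lemma exists_natCast_le_iff_region {K : ℕ} {v : ℝ≥0} :
    (∃ m : ℕ, m ≤ K ∧ v = m) ↔ ∃ n, region K v = some (n, true) := by
  constructor
  · rintro ⟨m, hm, rfl⟩
    refine ⟨m, ?_⟩
    rw [region, if_neg (not_lt.mpr (by exact_mod_cast hm)), Nat.floor_natCast, fracPart_natCast]
    simp
  · rintro ⟨n, hn⟩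
    unfold region at hn
    split_ifs at hn with hK
    simp only [Option.some.injEq, Prod.mk.injEq, decide_eq_true_eq] at hn
    obtain ⟨rfl, h0⟩ := hn
    have hv : v = ⌊v⌋₊ := fracPart_eq_zero_iff.mp h0
    exact ⟨⌊v⌋₊, by exact_mod_cast hv ▸ not_lt.mp hK, hv⟩

lemma RegEq.resetStep {K : ℕ} {x y : ℝ≥0} (h : RegEq K x y) :
    RegEq K (resetStep K x) (resetStep K y) := by
  have hreset : (∃ m : ℕ, m ≤ K ∧ x = m) ↔ (∃ m : ℕ, m ≤ K ∧ y = m) := by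
    rw [exists_natCast_le_iff_region, exists_natCast_le_iff_region, regEq_iff_region_eq.mp h]
  unfold IRTA.resetStep
  split_ifs with hx hy hy
  · exact regEq_refl K 0
  · exact absurd (hreset.mp hx) hy
  · exact absurd (hreset.mpr hy) hx
  · exact h

end Region

section FScale

variable {lam lam' : ℝ≥0}

lemma fScale_of_le {s : ℝ≥0} (hs : s ≤ lam) : fScale lam lam' s = lam' / lam * s := if_pos hs

lemma fScale_of_lt {s : ℝ≥0} (hs : lam < s) :
    fScale lam lam' s = lam' + (1 - lam') / (1 - lam) * (s - lam) := if_neg hs.not_ge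

lemma fScale_strictMono (h : lam ∈ Set.Ioo (0 : ℝ≥0) 1) (h' : lam' ∈ Set.Ioo (0 : ℝ≥0) 1) :
    StrictMono (fScale lam lam') := by
  have hleft : 0 < lam' / lam := div_pos h'.1 h.1
  have hright : 0 < (1 - lam') / (1 - lam) := div_pos (tsub_pos_of_lt h'.2) (tsub_pos_of_lt h.2)
  intro a b hab
  unfold fScale
  split_ifs with ha hb hb
  · exact mul_lt_mul_of_pos_left hab hleft
  · calc lam' / lam * a ≤ lam' / lam * lam := by gcongr
      _ = lam' := div_mul_cancel₀ lam' h.1.ne'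
      _ < _ := lt_add_of_pos_right _ (mul_pos hright (tsub_pos_of_lt (not_le.mp hb)))
  · exact absurd (hab.le.trans hb) ha
  · gcongr
    exact tsub_lt_tsub_right_of_le (not_le.mp ha).le hab

lemma fScale_self (h : lam ≠ 0) : fScale lam lam' lam = lam' := by
  rw [fScale_of_le le_rfl, div_mul_cancel₀ lam' h]

lemma fScale_one (h : lam < 1) (h' : lam' ≤ 1) : fScale lam lam' 1 = 1 := by
  rw [fScale_of_lt h, div_mul_cancel₀ _ (tsub_pos_of_lt h).ne',
    add_tsub_cancel_of_le h']

lemma fScale_lt_one (h : lam ∈ Set.Ioo (0 : ℝ≥0) 1) (h' : lam' ∈ Set.Ioo (0 : ℝ≥0) 1)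
    {s : ℝ≥0} (hs : s < 1) : fScale lam lam' s < 1 := by
  simpa only [fScale_one h.2 h'.2.le] using fScale_strictMono h h' hs

lemma fScale_fScale {lam₁ lam₂ lam₃ : ℝ≥0} (h₁ : lam₁ ∈ Set.Ioo (0 : ℝ≥0) 1)
    (h₂ : lam₂ ∈ Set.Ioo (0 : ℝ≥0) 1) (s : ℝ≥0) :
    fScale lam₂ lam₃ (fScale lam₁ lam₂ s) = fScale lam₁ lam₃ s := by
  have hmono : fScale lam₁ lam₂ s ≤ lam₂ ↔ s ≤ lam₁ := by
    simpa only [fScale_self h₁.1.ne'] using (fScale_strictMono h₁ h₂).le_iff_le (b := lam₁)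
  rcases le_or_gt s lam₁ with hs | hs
  · rw [fScale_of_le (hmono.mpr hs), fScale_of_le hs, fScale_of_le hs, ← mul_assoc,
      div_mul_div_cancel₀ h₂.1.ne']
  · rw [fScale_of_lt (lt_of_not_ge (hmono.not.mpr hs.not_ge)), fScale_of_lt hs, fScale_of_lt hs,
      add_tsub_cancel_left, ← mul_assoc, div_mul_div_cancel₀ (tsub_pos_of_lt h₂.2).ne']

end FScale

section TauStep

variable {K : ℕ} {y y' : ℝ≥0}

lemma tauStep_of_isOpenRegion (hy : IsOpenRegion K y) (t : ℝ≥0) :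
    tauStep K y y' t = ⌊t⌋₊ + fScale (1 - fracPart y) (1 - fracPart y') (fracPart t) := by
  rw [tauStep, if_neg]
  rintro (⟨⟨m, rfl⟩, -⟩ | ⟨hK, -⟩)
  · exact hy.1 (fracPart_natCast m)
  · exact hy.2 hK

lemma RegEq.tauStep_of_not_isOpenRegion (h : RegEq K y y') (hy : ¬ IsOpenRegion K y)
    (t : ℝ≥0) : tauStep K y y' t = t := by
  rw [tauStep, if_pos]
  rcases h.eq_or_lt_of_not_isOpenRegion hy with rfl | hK
  · by_cases hK : (K : ℝ≥0) < y
    · exact Or.inr ⟨hK, hK⟩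
    · have hnat : IsNatVal y :=
        ⟨⌊y⌋₊, fracPart_eq_zero_iff.mp (not_not.mp fun h0 => hy ⟨h0, hK⟩)⟩
      exact Or.inl ⟨hnat, hnat⟩
  · exact Or.inr hK

lemma RegEq.tauStep_tauStep {y₁ y₂ y₃ : ℝ≥0} (h₁₂ : RegEq K y₁ y₂) (h₂₃ : RegEq K y₂ y₃)
    (t : ℝ≥0) : tauStep K y₂ y₃ (tauStep K y₁ y₂ t) = tauStep K y₁ y₃ t := by
  by_cases hy₁ : IsOpenRegion K y₁
  · have hy₂ := h₁₂.isOpenRegion_iff.mp hy₁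
    have hlt : fScale (1 - fracPart y₁) (1 - fracPart y₂) (fracPart t) < 1 :=
      fScale_lt_one (one_sub_fracPart_mem_Ioo hy₁.1) (one_sub_fracPart_mem_Ioo hy₂.1)
        (fracPart_lt_one t)
    rw [tauStep_of_isOpenRegion hy₁, tauStep_of_isOpenRegion hy₂,
      tauStep_of_isOpenRegion hy₁, floor_natCast_add, Nat.floor_eq_zero.mpr hlt, add_zero,
      fracPart_natCast_add, fracPart_of_lt_one hlt,
      fScale_fScale (one_sub_fracPart_mem_Ioo hy₁.1) (one_sub_fracPart_mem_Ioo hy₂.1)]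
  · rw [h₁₂.tauStep_of_not_isOpenRegion hy₁,
      h₂₃.tauStep_of_not_isOpenRegion (h₁₂.isOpenRegion_iff.not.mp hy₁),
      (h₁₂.trans h₂₃).tauStep_of_not_isOpenRegion hy₁]

lemma RegEq.add_tauStep (h : RegEq K y y') (t : ℝ≥0) :
    RegEq K (y + t) (y' + tauStep K y y' t) := by
  by_cases hy : IsOpenRegion K y
  · have hy' := h.isOpenRegion_iff.mp hy
    rw [tauStep_of_isOpenRegion hy]
    have hμ := one_sub_fracPart_mem_Ioo hy.1
    have hμ' := one_sub_fracPart_mem_Ioo hy'.1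
    obtain ⟨hfl, hfr⟩ := floor_fracPart_add ⟨pos_iff_ne_zero.mpr hy.1, fracPart_lt_one y⟩
      (fracPart_lt_one t)
    obtain ⟨hfl', hfr'⟩ := floor_fracPart_add ⟨pos_iff_ne_zero.mpr hy'.1, fracPart_lt_one y'⟩
      (fScale_lt_one hμ hμ' (fracPart_lt_one t))
    have hf := fScale_strictMono hμ hμ'
    set f := fScale (1 - fracPart y) (1 - fracPart y')
    have hfμ : f (1 - fracPart y) = 1 - fracPart y' := fScale_self hμ.1.ne'
    have hle : 1 - fracPart y ≤ fracPart t ↔ 1 - fracPart y' ≤ f (fracPart t) := by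
      rw [← hfμ, hf.le_iff_le]
    have heq : fracPart t = 1 - fracPart y ↔ f (fracPart t) = 1 - fracPart y' := by
      rw [← hfμ, hf.injective.eq_iff]
    have hsum : y + t = ↑(⌊y⌋₊ + ⌊t⌋₊) + (fracPart y + fracPart t) := by
      conv_lhs => rw [← floor_add_fracPart y, ← floor_add_fracPart t]
      push_cast
      ring
    have hsum' :
        y' + (⌊t⌋₊ + f (fracPart t)) = ↑(⌊y'⌋₊ + ⌊t⌋₊) + (fracPart y' + f (fracPart t)) := by
      conv_lhs => rw [← floor_add_fracPart y']
      push_cast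
      ring
    left
    rw [hsum, hsum', floor_natCast_add, floor_natCast_add, fracPart_natCast_add,
      fracPart_natCast_add, hfl, hfl', hfr, hfr', h.floor_eq hy.2]
    exact ⟨by simp only [hle], heq⟩
  · rw [h.tauStep_of_not_isOpenRegion hy]
    rcases h.eq_or_lt_of_not_isOpenRegion hy with rfl | ⟨hK, hK'⟩
    · exact regEq_refl K _
    · exact Or.inr ⟨hK.trans_le le_self_add, hK'.trans_le le_self_add⟩

lemma tauAux_tauAux (d : Timestamp) {y₁ y₂ y₃ : ℝ≥0} (h₁₂ : RegEq K y₁ y₂)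
    (h₂₃ : RegEq K y₂ y₃) : tauAux K y₂ y₃ (tauAux K y₁ y₂ d) = tauAux K y₁ y₃ d := by
  induction d generalizing y₁ y₂ y₃ with
  | nil => rfl
  | cons t d ih =>
    have hstep := h₁₂.tauStep_tauStep h₂₃ t
    have h₂₃' := (h₂₃.add_tauStep (tauStep K y₁ y₂ t)).resetStep
    rw [hstep] at h₂₃'
    simp only [tauAux, hstep]
    exact congrArg _ (ih (h₁₂.add_tauStep t).resetStep h₂₃')

end TauStep

/-- `τ_{x₂→x₃} ∘ τ_{x₁→x₂} = τ_{x₁→x₃}`. -/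
theorem statement6 (K : ℕ) (x₁ x₂ x₃ : ℝ≥0) (h12 : RegEq K x₁ x₂) (h23 : RegEq K x₂ x₃) :
    ∀ d : Timestamp, tau K x₂ x₃ (tau K x₁ x₂ d) = tau K x₁ x₃ d :=
  fun d => tauAux_tauAux d h12.resetStep h23.resetStep

end IRTA
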